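/- arXiv:1410.0191 — 2 statements merged into one kernel-verified Lean document; each statement's English description precedes it below -/
import Mathlib

section
/- For the relativistic Toda lattice, the quadratic bracket defined by {a_i, a_{i+1}} = a_i a_{i+1}, {a_i, b_i} = −a_i b_i, {a_i, b_{i+1}} = a_i b_{i+1}, all other coordinate brackets zero, satisfies the Jacobi identity. -/
/-- Index set for relativistic Toda variables `(a_1, …, a_{N-1}, b_1, …, b_N)` (0-based). -/
abbrev RTodaIdx (N : ℕ) := Fin (N - 1) ⊕ Fin N

/-- The value of the `a`-variable with (0-based) index `m`, zero out of range. -/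
noncomputable def av {N : ℕ} (x : RTodaIdx N → ℝ) (m : ℕ) : ℝ :=
  if h : m < N - 1 then x (.inl ⟨m, h⟩) else 0

/-- The value of the `b`-variable with (0-based) index `m`, zero out of range. -/
noncomputable def bv {N : ℕ} (x : RTodaIdx N → ℝ) (m : ℕ) : ℝ :=
  if h : m < N then x (.inr ⟨m, h⟩) else 0

/-- Structure matrix of the quadratic relativistic Toda bracket:
`{a_i, a_{i+1}} = a_i a_{i+1}`, `{a_i, b_i} = −a_i b_i`,
`{a_i, b_{i+1}} = a_i b_{i+1}`, all other coordinate brackets zero. -/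
noncomputable def relQuadP (N : ℕ) : RTodaIdx N → RTodaIdx N → (RTodaIdx N → ℝ) → ℝ
  | .inl i, .inl j, x =>
      if (j : ℕ) = (i : ℕ) + 1 then av x i * av x j
      else if (i : ℕ) = (j : ℕ) + 1 then -(av x j * av x i) else 0
  | .inl i, .inr j, x =>
      if (j : ℕ) = (i : ℕ) then -(av x i * bv x j)
      else if (j : ℕ) = (i : ℕ) + 1 then av x i * bv x j else 0
  | .inr j, .inl i, x =>
      -(if (j : ℕ) = (i : ℕ) then -(av x i * bv x j)
        else if (j : ℕ) = (i : ℕ) + 1 then av x i * bv x j else 0)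
  | .inr _, .inr _, _ => 0

/-- Partial derivative in the `s`-th coordinate direction. -/
noncomputable def pd {N : ℕ} (f : (RTodaIdx N → ℝ) → ℝ) (s : RTodaIdx N) (x : RTodaIdx N → ℝ) : ℝ :=
  fderiv ℝ f x (Pi.single s 1)

/-! The bracket is log-canonical, `{x_u, x_v} = ε_uv x_u x_v` with `ε` constant and antisymmetric
(here `ε_uv = {x_u, x_v}` evaluated at `x = 1`). For such brackets the cyclic sum in the Jacobi
identity is `x_u x_v x_w` times a combination of the products `ε_uv ε_vw`, `ε_vw ε_wu`, `ε_wu ε_uv`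
that cancels by antisymmetry. -/

def logCanonicalBracket {R ι : Type*} [Mul R] (ε : ι → ι → R) (u v : ι) (x : ι → R) : R :=
  ε u v * x u * x v

section LogCanonical

variable {𝕜 ι : Type*} [NontriviallyNormedField 𝕜] [Fintype ι]

theorem fderiv_logCanonicalBracket_apply (ε : ι → ι → 𝕜) (v w : ι) (x y : ι → 𝕜) :
    fderiv 𝕜 (logCanonicalBracket ε v w) x y = ε v w * (x v * y w + x w * y v) := by
  change fderiv 𝕜 (fun z => ε v w * z v * z w) x _ = _
  have h := ((hasFDerivAt_apply (𝕜 := 𝕜) v x).mul (hasFDerivAt_apply w x)).const_mul (ε v w)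
  simp only [Pi.mul_apply, ← mul_assoc] at h
  simp [h.fderiv, mul_add]

theorem logCanonicalBracket_jacobi [DecidableEq ι] (ε : ι → ι → 𝕜) (hε : ∀ u v, ε v u = -ε u v)
    (x : ι → 𝕜) (u v w : ι) :
    ∑ s, (logCanonicalBracket ε s u x * fderiv 𝕜 (logCanonicalBracket ε v w) x (Pi.single s 1)
      + logCanonicalBracket ε s v x * fderiv 𝕜 (logCanonicalBracket ε w u) x (Pi.single s 1)
      + logCanonicalBracket ε s w x * fderiv 𝕜 (logCanonicalBracket ε u v) x (Pi.single s 1))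
      = 0 := by
  simp only [fderiv_logCanonicalBracket_apply, logCanonicalBracket, Pi.single_apply, mul_ite,
    mul_one, mul_zero, mul_add, Finset.sum_add_distrib, Finset.sum_ite_eq, Finset.mem_univ, if_true]
  rw [hε u v, hε v w, hε w u]
  ring

end LogCanonical

theorem av_val {N : ℕ} (x : RTodaIdx N → ℝ) (i : Fin (N - 1)) : av x i = x (.inl i) := by
  simp [av]

theorem bv_val {N : ℕ} (x : RTodaIdx N → ℝ) (i : Fin N) : bv x i = x (.inr i) := by
  simp [bv]

theorem relQuadP_antisymm (N : ℕ) (u v : RTodaIdx N) (x : RTodaIdx N → ℝ) :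
    relQuadP N v u x = -relQuadP N u v x := by
  cases u <;> cases v <;> simp only [relQuadP, neg_zero]
  all_goals split_ifs <;> first | omega | ring

theorem relQuadP_eq_logCanonicalBracket (N : ℕ) :
    relQuadP N = logCanonicalBracket fun u v => relQuadP N u v 1 := by
  funext u v x
  unfold logCanonicalBracket
  cases u <;> cases v <;> simp only [relQuadP, av_val, bv_val, Pi.one_apply]
  all_goals try split_ifs
  all_goals ring

/-- The quadratic relativistic Toda bracket satisfies the Jacobi identity. -/
theorem relQuadToda_jacobi (N : ℕ) (x : RTodaIdx N → ℝ) (u v w : RTodaIdx N) :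
    ∑ s : RTodaIdx N, (relQuadP N s u x * pd (relQuadP N v w) s x
      + relQuadP N s v x * pd (relQuadP N w u) s x
      + relQuadP N s w x * pd (relQuadP N u v) s x) = 0 := by
  rw [relQuadP_eq_logCanonicalBracket]
  exact logCanonicalBracket_jacobi _ (fun u v => relQuadP_antisymm N u v 1) x u v w
end

section
/- The linear relativistic Toda bracket, defined by {a_i, b_i} = −a_i, {a_i, b_{i+1}} = a_i, {b_i, b_{i+1}} = −a_i and all other coordinate brackets zero, satisfies the Jacobi identity, and the trace function Σ a_i + Σ b_i is a Casimir of it. -/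
/-- Structure matrix of the linear relativistic Toda bracket:
`{a_i, b_i} = −a_i`, `{a_i, b_{i+1}} = a_i`, `{b_i, b_{i+1}} = −a_i`,
all other coordinate brackets zero. -/
noncomputable def relLinP (N : ℕ) : RTodaIdx N → RTodaIdx N → (RTodaIdx N → ℝ) → ℝ
  | .inl i, .inr j, x =>
      if (j : ℕ) = (i : ℕ) then -(x (.inl i))
      else if (j : ℕ) = (i : ℕ) + 1 then x (.inl i) else 0
  | .inr j, .inl i, x =>
      -(if (j : ℕ) = (i : ℕ) then -(x (.inl i))
        else if (j : ℕ) = (i : ℕ) + 1 then x (.inl i) else 0)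
  | .inr i, .inr j, x =>
      if (j : ℕ) = (i : ℕ) + 1 then -(av x i)
      else if (i : ℕ) = (j : ℕ) + 1 then av x j else 0
  | _, _, _ => 0

/-- The trace function `Σ a_i + Σ b_i`. -/
noncomputable def traceFn (N : ℕ) (x : RTodaIdx N → ℝ) : ℝ :=
  (∑ i : Fin (N - 1), x (.inl i)) + ∑ j : Fin N, x (.inr j)

/-- coefficient of `x (.inl m)` in `relLinP N u v x` -/
noncomputable def eC (N : ℕ) : RTodaIdx N → RTodaIdx N → Fin (N - 1) → ℝ
  | .inl i, .inr j, m =>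
      if (i : ℕ) = (m : ℕ) then
        (if (j : ℕ) = (i : ℕ) then -1 else if (j : ℕ) = (i : ℕ) + 1 then 1 else 0)
      else 0
  | .inr j, .inl i, m =>
      -(if (i : ℕ) = (m : ℕ) then
        (if (j : ℕ) = (i : ℕ) then -1 else if (j : ℕ) = (i : ℕ) + 1 then 1 else 0)
      else 0)
  | .inr i, .inr j, m =>
      (if (i : ℕ) = (m : ℕ) ∧ (j : ℕ) = (i : ℕ) + 1 then -1 else 0)
      + (if (j : ℕ) = (m : ℕ) ∧ (i : ℕ) = (j : ℕ) + 1 then 1 else 0)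
  | _, _, _ => 0

lemma av_coe {N : ℕ} (x : RTodaIdx N → ℝ) (i : Fin (N - 1)) : av x (i : ℕ) = x (.inl i) := by
  rw [av, dif_pos i.isLt]

lemma sum_if_av {N : ℕ} (x : RTodaIdx N → ℝ) (c : ℕ) (r : ℝ) :
    ∑ m : Fin (N - 1), (if c = (m : ℕ) then r else 0) * x (.inl m) = r * av x c := by
  rw [av]
  by_cases h : c < N - 1
  · rw [dif_pos h, Finset.sum_eq_single (⟨c, h⟩ : Fin (N - 1))]
    · simp
    · intro b _ hb
      rw [if_neg, zero_mul]
      intro hc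
      exact hb (Fin.ext hc.symm)
    · simp
  · rw [dif_neg h, mul_zero]
    apply Finset.sum_eq_zero
    intro m _
    rw [if_neg, zero_mul]
    rintro rfl
    exact h m.isLt

lemma sum_if_finN {N : ℕ} (c : ℕ) (r : ℝ) :
    ∑ q : Fin N, (if (q : ℕ) = c then r else 0) = if c < N then r else 0 := by
  by_cases h : c < N
  · rw [if_pos h, Finset.sum_eq_single (⟨c, h⟩ : Fin N)]
    · simp
    · intro b _ hb
      rw [if_neg]
      intro hc
      exact hb (Fin.ext hc)
    · simp
  · rw [if_neg h]
    apply Finset.sum_eq_zero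
    intro q _
    rw [if_neg]
    rintro rfl
    exact h q.isLt

lemma sumE {N : ℕ} (u v : RTodaIdx N) (x : RTodaIdx N → ℝ) :
    relLinP N u v x = ∑ m : Fin (N - 1), eC N u v m * x (.inl m) := by
  rcases u with i | i <;> rcases v with j | j
  · simp [relLinP, eC]
  · show _ = ∑ m : Fin (N - 1), (if (i : ℕ) = (m : ℕ) then
        (if (j : ℕ) = (i : ℕ) then (-1:ℝ) else if (j : ℕ) = (i : ℕ) + 1 then 1 else 0)
      else 0) * x (.inl m)
    rw [sum_if_av, av_coe]
    show relLinP N (.inl i) (.inr j) x = _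
    rw [relLinP]
    split_ifs <;> ring
  · show _ = ∑ m : Fin (N - 1), (-(if (j : ℕ) = (m : ℕ) then
        (if (i : ℕ) = (j : ℕ) then (-1:ℝ) else if (i : ℕ) = (j : ℕ) + 1 then 1 else 0)
      else 0)) * x (.inl m)
    simp only [neg_mul]
    rw [Finset.sum_neg_distrib, sum_if_av, av_coe]
    show relLinP N (.inr i) (.inl j) x = _
    rw [relLinP]
    split_ifs <;> ring
  · show _ = ∑ m : Fin (N - 1),
      ((if (i : ℕ) = (m : ℕ) ∧ (j : ℕ) = (i : ℕ) + 1 then (-1:ℝ) else 0)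
      + (if (j : ℕ) = (m : ℕ) ∧ (i : ℕ) = (j : ℕ) + 1 then (1:ℝ) else 0)) * x (.inl m)
    simp only [add_mul, ite_and]
    rw [Finset.sum_add_distrib, sum_if_av, sum_if_av]
    show relLinP N (.inr i) (.inr j) x = _
    rw [relLinP]
    split_ifs <;> (try (exfalso; omega)) <;> ring

noncomputable def Lmap (N : ℕ) (u v : RTodaIdx N) : (RTodaIdx N → ℝ) →L[ℝ] ℝ :=
  ∑ m : Fin (N - 1), eC N u v m • ContinuousLinearMap.proj (R := ℝ) (φ := fun _ : RTodaIdx N => ℝ) (.inl m)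

lemma relLinP_eq_L {N : ℕ} (u v : RTodaIdx N) : relLinP N u v = ⇑(Lmap N u v) := by
  funext x
  rw [sumE u v x]
  simp [Lmap]

noncomputable def dC (N : ℕ) (u v : RTodaIdx N) : RTodaIdx N → ℝ
  | .inl p => eC N u v p
  | .inr _ => 0

lemma pd_relLinP {N : ℕ} (u v s : RTodaIdx N) (x : RTodaIdx N → ℝ) :
    pd (relLinP N u v) s x = dC N u v s := by
  rw [pd, relLinP_eq_L, (Lmap N u v).fderiv]
  rcases s with p | q <;>
    simp [Lmap, dC, Pi.single_apply, Finset.sum_ite_eq', mul_ite]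

noncomputable def Tmap (N : ℕ) : (RTodaIdx N → ℝ) →L[ℝ] ℝ :=
  (∑ i : Fin (N - 1), ContinuousLinearMap.proj (R := ℝ) (φ := fun _ : RTodaIdx N => ℝ) (.inl i))
  + ∑ j : Fin N, ContinuousLinearMap.proj (R := ℝ) (φ := fun _ : RTodaIdx N => ℝ) (.inr j)

lemma traceFn_eq (N : ℕ) : traceFn N = ⇑(Tmap N) := by
  funext x
  simp [traceFn, Tmap]

lemma pd_trace {N : ℕ} (u : RTodaIdx N) (x : RTodaIdx N → ℝ) :
    pd (traceFn N) u x = 1 := by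
  rw [pd, traceFn_eq, (Tmap N).fderiv]
  rcases u with p | q <;>
    simp [Tmap, Pi.single_apply, Finset.sum_ite_eq']

noncomputable def gC (N : ℕ) (p : Fin (N - 1)) : RTodaIdx N → ℝ
  | .inr j => if (j : ℕ) = (p : ℕ) then -1 else if (j : ℕ) = (p : ℕ) + 1 then 1 else 0
  | .inl _ => 0

lemma relLinP_inl {N : ℕ} (p : Fin (N - 1)) (u : RTodaIdx N) (x : RTodaIdx N → ℝ) :
    relLinP N (.inl p) u x = gC N p u * x (.inl p) := by
  rcases u with i | j
  · simp [relLinP, gC]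
  · show (if (j : ℕ) = (p : ℕ) then -(x (.inl p))
      else if (j : ℕ) = (p : ℕ) + 1 then x (.inl p) else 0) = _
    rw [gC]
    split_ifs <;> ring

set_option maxHeartbeats 1600000 in
lemma Jcore {N : ℕ} (u v w : RTodaIdx N) (p : Fin (N - 1)) :
    gC N p u * eC N v w p + gC N p v * eC N w u p + gC N p w * eC N u v p = 0 := by
  have key : ∀ s t : ℕ, ((s = (p : ℕ) ∧ t = s + 1) ↔ (s = (p : ℕ) ∧ t = (p : ℕ) + 1)) := by
    intros; omega
  rcases u with a | a <;> rcases v with b | b <;> rcases w with c | c <;>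
    simp only [gC, eC, key, ite_and] <;>
    (try split_ifs) <;> (try (exfalso; omega)) <;> norm_num

lemma sumU {N : ℕ} (v : RTodaIdx N) (m : Fin (N - 1)) :
    ∑ u : RTodaIdx N, eC N u v m = 0 := by
  rw [Fintype.sum_sum_type]
  rcases v with i | j
  · have h1 : ∑ p : Fin (N - 1), eC N (.inl p) (.inl i) m = 0 := by simp [eC]
    rw [h1, zero_add]
    by_cases him : (i : ℕ) = (m : ℕ)
    · have hsplit : ∀ q : Fin N,
          eC N (.inr q) (.inl i) m
            = -((if (q : ℕ) = (i : ℕ) then (-1:ℝ) else 0)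
                + (if (q : ℕ) = (i : ℕ) + 1 then (1:ℝ) else 0)) := by
        intro q
        show -(if (i : ℕ) = (m : ℕ) then
            (if (q : ℕ) = (i : ℕ) then (-1:ℝ) else if (q : ℕ) = (i : ℕ) + 1 then 1 else 0)
          else 0) = _
        rw [if_pos him]
        split_ifs <;> (try (exfalso; omega)) <;> norm_num
      simp only [hsplit]
      rw [Finset.sum_neg_distrib, Finset.sum_add_distrib, sum_if_finN, sum_if_finN]
      have hi := i.isLt
      rw [if_pos (by omega : (i : ℕ) < N), if_pos (by omega : (i : ℕ) + 1 < N)]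
      ring
    · apply Finset.sum_eq_zero
      intro q _
      show -(if (i : ℕ) = (m : ℕ) then
          (if (q : ℕ) = (i : ℕ) then (-1:ℝ) else if (q : ℕ) = (i : ℕ) + 1 then 1 else 0)
        else 0) = 0
      rw [if_neg him, neg_zero]
  · have k1 : ∀ q : ℕ, ((q = (m : ℕ) ∧ (j : ℕ) = q + 1) ↔ (q = (m : ℕ) ∧ (j : ℕ) = (m : ℕ) + 1)) := by
      intro q; omega
    have k2 : ∀ q : ℕ, (((j : ℕ) = (m : ℕ) ∧ q = (j : ℕ) + 1) ↔ (q = (j : ℕ) + 1 ∧ (j : ℕ) = (m : ℕ))) := by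
      intro q; omega
    have h1 : ∑ p : Fin (N - 1), eC N (.inl p) (.inr j) m
        = (if (j : ℕ) = (m : ℕ) then (-1:ℝ) else if (j : ℕ) = (m : ℕ) + 1 then 1 else 0) := by
      show ∑ p : Fin (N - 1), (if (p : ℕ) = (m : ℕ) then
          (if (j : ℕ) = (p : ℕ) then (-1:ℝ) else if (j : ℕ) = (p : ℕ) + 1 then 1 else 0)
        else 0) = _
      simp [Fin.val_eq_val, Finset.sum_ite_eq']
    have h2 : ∑ q : Fin N, eC N (.inr q) (.inr j) m
        = (if (m : ℕ) < N then (if (j : ℕ) = (m : ℕ) + 1 then (-1:ℝ) else 0) else 0)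
          + (if (j : ℕ) + 1 < N then (if (j : ℕ) = (m : ℕ) then (1:ℝ) else 0) else 0) := by
      show ∑ q : Fin N,
          ((if (q : ℕ) = (m : ℕ) ∧ (j : ℕ) = (q : ℕ) + 1 then (-1:ℝ) else 0)
            + (if (j : ℕ) = (m : ℕ) ∧ (q : ℕ) = (j : ℕ) + 1 then (1:ℝ) else 0)) = _
      simp only [k1, k2, ite_and]
      rw [Finset.sum_add_distrib, sum_if_finN, sum_if_finN]
    rw [h1, h2]
    have hm := m.isLt
    have hj := j.isLt
    split_ifs <;> (try (exfalso; omega)) <;> norm_num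

/-- The linear relativistic Toda bracket satisfies the Jacobi identity, and the
trace function `Σ a_i + Σ b_i` is a Casimir of it. -/
theorem relLinToda_jacobi_and_casimir (N : ℕ) :
    (∀ (x : RTodaIdx N → ℝ) (u v w : RTodaIdx N),
      ∑ s : RTodaIdx N, (relLinP N s u x * pd (relLinP N v w) s x
        + relLinP N s v x * pd (relLinP N w u) s x
        + relLinP N s w x * pd (relLinP N u v) s x) = 0)
    ∧ (∀ (x : RTodaIdx N → ℝ) (v : RTodaIdx N),
      ∑ u : RTodaIdx N, relLinP N u v x * pd (traceFn N) u x = 0) := by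
  constructor
  · intro x u v w
    simp only [pd_relLinP]
    rw [Fintype.sum_sum_type]
    have hA : ∑ p : Fin (N - 1),
        (relLinP N (.inl p) u x * dC N v w (.inl p)
          + relLinP N (.inl p) v x * dC N w u (.inl p)
          + relLinP N (.inl p) w x * dC N u v (.inl p)) = 0 := by
      apply Finset.sum_eq_zero
      intro p _
      show relLinP N (.inl p) u x * eC N v w p
          + relLinP N (.inl p) v x * eC N w u p
          + relLinP N (.inl p) w x * eC N u v p = 0
      rw [relLinP_inl, relLinP_inl, relLinP_inl]
      linear_combination x (.inl p) * Jcore u v w p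
    have hB : ∑ q : Fin N,
        (relLinP N (.inr q) u x * dC N v w (.inr q)
          + relLinP N (.inr q) v x * dC N w u (.inr q)
          + relLinP N (.inr q) w x * dC N u v (.inr q)) = 0 := by
      apply Finset.sum_eq_zero
      intro q _
      show relLinP N (.inr q) u x * 0 + relLinP N (.inr q) v x * 0
          + relLinP N (.inr q) w x * 0 = 0
      ring
    rw [hA, hB, add_zero]
  · intro x v
    calc ∑ u : RTodaIdx N, relLinP N u v x * pd (traceFn N) u x
        = ∑ u : RTodaIdx N, relLinP N u v x := by
          refine Finset.sum_congr rfl fun u _ => ?_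
          rw [pd_trace, mul_one]
      _ = ∑ u : RTodaIdx N, ∑ m : Fin (N - 1), eC N u v m * x (.inl m) :=
          Finset.sum_congr rfl fun u _ => sumE u v x
      _ = ∑ m : Fin (N - 1), ∑ u : RTodaIdx N, eC N u v m * x (.inl m) :=
          Finset.sum_comm
      _ = 0 := Finset.sum_eq_zero fun m _ => by
          rw [← Finset.sum_mul, sumU, zero_mul]
end
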